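/- Let K be a cycle with vertices h_1, h_2, h_3, v_1, …, v_m in cyclic order, where m ≥ 2, and let H be the induced path h_1 h_2 h_3 in K. Let L_1 and L_2 be list assignments for K such that |L_1(v_j) ∩ L_2(v_j)| ≥ 5 for every j ∈ {1,…,m}. Let φ_0 be a proper coloring of K and let δ be an (L_1,L_2)-trajectory in H starting with the restriction of φ_0 to V(H). Then δ lifts to an (L_1,L_2)-trajectory in K starting with φ_0 that is stable outside of H. -/

import Mathlib

/-- Applying a sequence of recolorings `(vertex, color)` to a coloring, one at a time. -/
def applySeq {V : Type*} [DecidableEq V] (φ : V → ℕ) (σ : List (V × ℕ)) : V → ℕ :=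
  σ.foldl (fun ψ p => Function.update ψ p.1 p.2) φ

/-- `φ` is a proper coloring of the subgraph of `G` induced on the vertex set `S`. -/
def ProperOn {V : Type*} (G : SimpleGraph V) (S : Finset V) (φ : V → ℕ) : Prop :=
  ∀ u ∈ S, ∀ v ∈ S, G.Adj u v → φ u ≠ φ v

/-- A sequence of recolorings is proper (on `G[S]`, starting from `φ`) if every
intermediate coloring is a proper coloring of `G[S]`. -/
def ProperSeqOn {V : Type*} [DecidableEq V] (G : SimpleGraph V) (S : Finset V)
    (φ : V → ℕ) (σ : List (V × ℕ)) : Prop :=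
  ∀ τ : List (V × ℕ), τ <+: σ → ProperOn G S (applySeq φ τ)

/-- A sequence of recolorings is once-only if each vertex is recolored at most once. -/
def OnceOnly {V : Type*} (σ : List (V × ℕ)) : Prop := (σ.map Prod.fst).Nodup

/-- All recolorings of `σ` happen at vertices of `S`. -/
def SeqIn {V : Type*} (S : Finset V) (σ : List (V × ℕ)) : Prop := ∀ p ∈ σ, p.1 ∈ S

/-- `(σ1, σ2)` is a witness that `(φ0, φ1, φ2)` is an `(L1, L2)`-trajectory in the
subgraph of `G` induced on `S`: `φ0` is a proper coloring of `G[S]`, and for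
`i ∈ {1,2}`, `φ i` is an `L i`-coloring of `G[S]` obtained from `φ (i-1)` by the
proper once-only sequence of recolorings `σ i`. -/
def WitnessOn {V : Type*} [DecidableEq V] (G : SimpleGraph V) (S : Finset V)
    (L1 L2 : V → Finset ℕ) (φ0 φ1 φ2 : V → ℕ) (σ1 σ2 : List (V × ℕ)) : Prop :=
  ProperOn G S φ0 ∧
  SeqIn S σ1 ∧ OnceOnly σ1 ∧ ProperSeqOn G S φ0 σ1 ∧ applySeq φ0 σ1 = φ1 ∧
    (∀ v ∈ S, φ1 v ∈ L1 v) ∧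
  SeqIn S σ2 ∧ OnceOnly σ2 ∧ ProperSeqOn G S φ1 σ2 ∧ applySeq φ1 σ2 = φ2 ∧
    (∀ v ∈ S, φ2 v ∈ L2 v)

/-- `(φ0, φ1, φ2)` is an `(L1, L2)`-trajectory in `G[S]` (starting with `φ0`). -/
def TrajectoryOn {V : Type*} [DecidableEq V] (G : SimpleGraph V) (S : Finset V)
    (L1 L2 : V → Finset ℕ) (φ0 φ1 φ2 : V → ℕ) : Prop :=
  ∃ σ1 σ2 : List (V × ℕ), WitnessOn G S L1 L2 φ0 φ1 φ2 σ1 σ2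

/-- `σ^T`: the subsequence of `σ` consisting of the recolorings of vertices of `T`. -/
def subSeq {V : Type*} [DecidableEq V] (T : Finset V) (σ : List (V × ℕ)) :
    List (V × ℕ) :=
  σ.filter (fun p => p.1 ∈ T)

/-- `σ` is `T`-late: the recolorings of vertices of `T` appear after all the other
recolorings, i.e. `σ = σ^{complement of T} ++ σ^T`. -/
def LateFor {V : Type*} [DecidableEq V] (T : Finset V) (σ : List (V × ℕ)) : Prop :=
  σ = σ.filter (fun p => p.1 ∉ T) ++ subSeq T σ

/-- `(σ1, σ2)` witnesses that the `(L1, L2)`-trajectory `(δ0, δ1, δ2)` in `G[T]` lifts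
to the `(L1, L2)`-trajectory `(φ0, φ1, φ2)` in `G[S]`: each `δ i` is the restriction of
`φ i` to `T`, and each `σ i` is a proper once-only `T`-late sequence of recolorings from
`φ (i-1)` to `φ i`. -/
def LiftWitness {V : Type*} [DecidableEq V] (G : SimpleGraph V) (S T : Finset V)
    (L1 L2 : V → Finset ℕ) (δ0 δ1 δ2 φ0 φ1 φ2 : V → ℕ)
    (σ1 σ2 : List (V × ℕ)) : Prop :=
  (∀ v ∈ T, φ0 v = δ0 v) ∧ (∀ v ∈ T, φ1 v = δ1 v) ∧ (∀ v ∈ T, φ2 v = δ2 v) ∧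
  WitnessOn G S L1 L2 φ0 φ1 φ2 σ1 σ2 ∧ LateFor T σ1 ∧ LateFor T σ2

/-- The `(L1, L2)`-trajectory `(δ0, δ1, δ2)` in `G[T]` lifts to the `(L1, L2)`-trajectory
`(φ0, φ1, φ2)` in `G[S]`. -/
def LiftsTo {V : Type*} [DecidableEq V] (G : SimpleGraph V) (S T : Finset V)
    (L1 L2 : V → Finset ℕ) (δ0 δ1 δ2 φ0 φ1 φ2 : V → ℕ) : Prop :=
  ∃ σ1 σ2 : List (V × ℕ), LiftWitness G S T L1 L2 δ0 δ1 δ2 φ0 φ1 φ2 σ1 σ2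


set_option linter.unusedSectionVars false
set_option maxHeartbeats 1000000

section helpersA

variable {V : Type*} [DecidableEq V]

lemma applySeq_nil (φ : V → ℕ) : applySeq φ [] = φ := rfl

lemma applySeq_cons (φ : V → ℕ) (p : V × ℕ) (σ : List (V × ℕ)) :
    applySeq φ (p :: σ) = applySeq (Function.update φ p.1 p.2) σ := rfl

lemma applySeq_append (φ : V → ℕ) (σ τ : List (V × ℕ)) :
    applySeq φ (σ ++ τ) = applySeq (applySeq φ σ) τ := List.foldl_append ..

lemma applySeq_congr {φ ψ : V → ℕ} (σ : List (V × ℕ)) {v : V} (h : φ v = ψ v) :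
    applySeq φ σ v = applySeq ψ σ v := by
  induction σ generalizing φ ψ with
  | nil => exact h
  | cons p σ ih =>
      rw [applySeq_cons, applySeq_cons]
      apply ih
      by_cases hv : v = p.1
      · subst hv; simp [Function.update]
      · simpa [Function.update, hv] using h

lemma applySeq_of_not_mem {φ : V → ℕ} {σ : List (V × ℕ)} {v : V}
    (h : v ∉ σ.map Prod.fst) : applySeq φ σ v = φ v := by
  induction σ generalizing φ with
  | nil => rfl
  | cons p σ ih =>
      simp only [List.map_cons, List.mem_cons, not_or] at h
      rw [applySeq_cons, ih h.2, Function.update_of_ne h.1]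

lemma applySeq_prefix_once {φ : V → ℕ} {σ τ : List (V × ℕ)} {v : V}
    (hτ : τ <+: σ) (hσ : OnceOnly σ) :
    applySeq φ τ v = φ v ∨ applySeq φ τ v = applySeq φ σ v := by
  by_cases hv : v ∈ τ.map Prod.fst
  · right
    obtain ⟨ρ, rfl⟩ := hτ
    rw [applySeq_append]
    rw [applySeq_of_not_mem (φ := applySeq φ τ) (σ := ρ)]
    unfold OnceOnly at hσ
    rw [List.map_append, List.nodup_append] at hσ
    exact fun hvρ => hσ.2.2 v hv v hvρ rfl
  · left; exact applySeq_of_not_mem hv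

lemma applySeq_range_map_of_lt (φ : V → ℕ) (f : ℕ → V) (g : ℕ → ℕ) {n k : ℕ}
    (hf : ∀ i j, i < n → j < n → f i = f j → i = j) (hk : k < n) :
    applySeq φ ((List.range n).map (fun k => (f k, g k))) (f k) = g k := by
  induction n with
  | zero => omega
  | succ n ih =>
      rw [List.range_succ, List.map_append, applySeq_append]
      simp only [List.map_cons, List.map_nil]
      rcases Nat.lt_or_ge k n with h | h
      · rw [applySeq_cons, applySeq_nil, Function.update_of_ne, ih]
        · exact fun i j hi hj => hf i j (by omega) (by omega)
        · exact h
        · intro he; exact absurd (hf k n (by omega) (by omega) he) (by omega)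
      · have : k = n := by omega
        subst this
        rw [applySeq_cons, applySeq_nil, Function.update_self]

lemma applySeq_range_map_of_ne (φ : V → ℕ) (f : ℕ → V) (g : ℕ → ℕ) {n : ℕ} {v : V}
    (hv : ∀ k, k < n → v ≠ f k) :
    applySeq φ ((List.range n).map (fun k => (f k, g k))) v = φ v := by
  apply applySeq_of_not_mem
  simp only [List.map_map, List.mem_map, List.mem_range, Function.comp]
  rintro ⟨k, hk, rfl⟩
  exact hv k hk rfl

lemma prefix_append_cases {τ l₁ l₂ : List (V × ℕ)} (h : τ <+: l₁ ++ l₂) :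
    τ <+: l₁ ∨ ∃ τ₂, τ₂ <+: l₂ ∧ τ = l₁ ++ τ₂ := by
  rcases le_or_gt τ.length l₁.length with hl | hl
  · left
    exact List.prefix_of_prefix_length_le h (l₁.prefix_append l₂) hl
  · right
    have h1 : l₁ <+: τ := List.prefix_of_prefix_length_le (l₁.prefix_append l₂) h (by omega)
    obtain ⟨τ₂, rfl⟩ := h1
    exact ⟨τ₂, (List.prefix_append_right_inj l₁).mp h, rfl⟩

noncomputable def pick (s F : Finset ℕ) : ℕ :=
  if h : (s \ F).Nonempty then h.choose else 0

lemma pick_spec {s F : Finset ℕ} (h : F.card < s.card) : pick s F ∈ s ∧ pick s F ∉ F := by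
  have hne : (s \ F).Nonempty := by
    rw [← Finset.card_pos]
    have := Finset.le_card_sdiff F s
    omega
  have := hne.choose_spec
  rw [Finset.mem_sdiff] at this
  rw [pick, dif_pos hne]
  exact this

noncomputable def chain (s : ℕ → Finset ℕ) (F : ℕ → ℕ → Finset ℕ) : ℕ → ℕ
  | 0 => pick (s 0) (F 0 0)
  | k+1 => pick (s (k+1)) (F (k+1) (chain s F k))


lemma card_two_le (a b : ℕ) : ({a, b} : Finset ℕ).card ≤ 2 := by
  refine (Finset.card_insert_le _ _).trans ?_
  simp

lemma card_four_le (a b c d : ℕ) : ({a, b, c, d} : Finset ℕ).card ≤ 4 := by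
  refine (Finset.card_insert_le _ _).trans ?_
  have h2 := Finset.card_insert_le b ({c, d} : Finset ℕ)
  have h3 := card_two_le c d
  omega

lemma chain_zero (s : ℕ → Finset ℕ) (F : ℕ → ℕ → Finset ℕ) :
    chain s F 0 = pick (s 0) (F 0 0) := rfl

lemma chain_succ (s : ℕ → Finset ℕ) (F : ℕ → ℕ → Finset ℕ) (k : ℕ) :
    chain s F (k+1) = pick (s (k+1)) (F (k+1) (chain s F k)) := rfl

end helpersA

/-- Lemma 7 (stable trajectory on the outer cycle): Let `K` be a cycle with vertices
`h1, h2, h3, v1, …, vm` in cyclic order (`m ≥ 2`), modelled as `cycleGraph (m + 3)` with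
`h1 = 0`, `h2 = 1`, `h3 = 2`, and let `H` be the induced path `h1 h2 h3`.  Let `L1`, `L2`
be list assignments for `K` with `|L1(v) ∩ L2(v)| ≥ 5` for every vertex `v` outside `H`.
Let `φ0` be a proper coloring of `K` and let `(δ0, δ1, δ2)` be an `(L1, L2)`-trajectory
in `H` starting with the restriction of `φ0`.  Then `(δ0, δ1, δ2)` lifts to an
`(L1, L2)`-trajectory in `K` starting with `φ0` that is stable outside of `H`. -/
theorem stable_trajectory_cycle (m : ℕ) (hm : 2 ≤ m)
    (L1 L2 : Fin (m + 3) → Finset ℕ)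
    (hL : ∀ v : Fin (m + 3), v ∉ ({0, 1, 2} : Finset (Fin (m + 3))) →
      5 ≤ ((L1 v) ∩ (L2 v)).card)
    (φ0 : Fin (m + 3) → ℕ)
    (hφ0 : ProperOn (SimpleGraph.cycleGraph (m + 3)) Finset.univ φ0)
    (δ0 δ1 δ2 : Fin (m + 3) → ℕ)
    (hstart : ∀ v ∈ ({0, 1, 2} : Finset (Fin (m + 3))), δ0 v = φ0 v)
    (hδ : TrajectoryOn (SimpleGraph.cycleGraph (m + 3)) ({0, 1, 2} : Finset (Fin (m + 3)))
      L1 L2 δ0 δ1 δ2) :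
    ∃ φ1 φ2 : Fin (m + 3) → ℕ,
      LiftsTo (SimpleGraph.cycleGraph (m + 3)) Finset.univ
        ({0, 1, 2} : Finset (Fin (m + 3))) L1 L2 δ0 δ1 δ2 φ0 φ1 φ2 ∧
      ∀ v : Fin (m + 3), v ∉ ({0, 1, 2} : Finset (Fin (m + 3))) → φ2 v = φ1 v := by
  classical
  obtain ⟨σa, σb, hδ0P, haIn, haOnce, haProp, haEq, hL1T, hbIn, hbOnce, hbProp, hbEq, hL2T⟩ := hδ
  set T : Finset (Fin (m + 3)) := ({0, 1, 2} : Finset (Fin (m + 3))) with hTdef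
  -- basic Fin facts
  have hval2 : ((2 : Fin (m+3))).val = 2 := by simp
  have hTmem : ∀ v : Fin (m+3), v ∈ T ↔ v.val < 3 := by
    intro v
    rw [hTdef]
    simp only [Finset.mem_insert, Finset.mem_singleton, Fin.ext_iff, Fin.val_zero, Fin.val_one, Fin.val_two]
    omega
  have h0T : (0 : Fin (m+3)) ∈ T := (hTmem 0).2 (by simp)
  have h2T : (2 : Fin (m+3)) ∈ T := (hTmem 2).2 (by rw [hval2]; omega)
  have hAdjSucc : ∀ i : Fin (m+3), (SimpleGraph.cycleGraph (m+3)).Adj i (i+1) := by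
    intro i
    rw [SimpleGraph.cycleGraph_adj']
    right
    rw [add_sub_cancel_left i 1]
    simp
  have hAdjCases : ∀ u v : Fin (m+3), (SimpleGraph.cycleGraph (m+3)).Adj u v →
      v = u + 1 ∨ u = v + 1 := by
    intro u v h
    rw [SimpleGraph.cycleGraph_adj'] at h
    rcases h with h | h
    · right
      have h' : u - v = 1 := by rwa [Fin.ext_iff, Fin.val_one]
      rw [sub_eq_iff_eq_add] at h'
      exact h'.trans (add_comm 1 _)
    · left
      have h' : v - u = 1 := by rwa [Fin.ext_iff, Fin.val_one]
      rw [sub_eq_iff_eq_add] at h'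
      exact h'.trans (add_comm 1 _)
  have hproper : ∀ ψ : Fin (m+3) → ℕ, (∀ i : Fin (m+3), ψ i ≠ ψ (i+1)) →
      ProperOn (SimpleGraph.cycleGraph (m+3)) Finset.univ ψ := by
    intro ψ h u _ v _ hadj
    rcases hAdjCases u v hadj with h' | h'
    · rw [h']; exact h u
    · rw [h']; exact (h v).symm
  -- the outside vertices and their new colors
  set w : ℕ → Fin (m+3) := fun k => Fin.ofNat (m+3) (3 + k) with hwdef
  have hw : ∀ k, k < m → (w k).val = 3 + k := by
    intro k hk
    rw [hwdef]
    exact Nat.mod_eq_of_lt (by omega)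
  set Fb : ℕ → ℕ → Finset ℕ := fun k p =>
    if k = 0 then {δ0 2, δ1 2, δ2 2, φ0 (w 1)}
    else if k = m - 1 then {p, δ0 0, δ1 0, δ2 0}
    else {p, φ0 (w (k+1))} with hFbdef
  set d : ℕ → ℕ := chain (fun k => L1 (w k) ∩ L2 (w k)) Fb with hddef
  have hcard5 : ∀ k, k < m → 5 ≤ (L1 (w k) ∩ L2 (w k)).card := by
    intro k hk
    refine hL (w k) ?_
    rw [hTmem, hw k hk]
    omega
  have hFcard : ∀ k p, (Fb k p).card ≤ 4 := by
    intro k p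
    simp only [hFbdef]
    split_ifs
    · exact card_four_le _ _ _ _
    · exact card_four_le _ _ _ _
    · exact (card_two_le _ _).trans (by omega)
  have hd0spec : d 0 ∈ L1 (w 0) ∩ L2 (w 0) ∧ d 0 ∉ Fb 0 0 := by
    have hzero : d 0 = pick (L1 (w 0) ∩ L2 (w 0)) (Fb 0 0) := by
      rw [hddef]; exact chain_zero _ _
    rw [hzero]
    exact pick_spec (by have := hFcard 0 0; have := hcard5 0 (by omega); omega)
  have hdsspec : ∀ k, k + 1 < m →
      d (k+1) ∈ L1 (w (k+1)) ∩ L2 (w (k+1)) ∧ d (k+1) ∉ Fb (k+1) (d k) := by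
    intro k hk
    have hstep : d (k+1) = pick (L1 (w (k+1)) ∩ L2 (w (k+1))) (Fb (k+1) (d k)) := by
      rw [hddef]; exact chain_succ _ _ _
    rw [hstep]
    exact pick_spec (by have := hFcard (k+1) (d k); have := hcard5 (k+1) hk; omega)
  have hdL : ∀ k, k < m → d k ∈ L1 (w k) ∩ L2 (w k) := by
    intro k hk
    cases k with
    | zero => exact hd0spec.1
    | succ k => exact (hdsspec k hk).1
  have hd0 : d 0 ≠ δ0 2 ∧ d 0 ≠ δ1 2 ∧ d 0 ≠ δ2 2 ∧ d 0 ≠ φ0 (w 1) := by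
    have h := hd0spec.2
    rw [hFbdef] at h
    simp only [if_true, eq_self_iff_true, Finset.mem_insert, Finset.mem_singleton, not_or] at h
    exact h
  have hdprev : ∀ k, k + 1 < m → d (k+1) ≠ d k := by
    intro k hk
    have h := (hdsspec k hk).2
    rw [hFbdef] at h
    simp only [Nat.succ_ne_zero, if_false] at h
    split_ifs at h with hcase <;>
      · simp only [Finset.mem_insert, Finset.mem_singleton, not_or] at h
        exact h.1
  have hdmid : ∀ k, k + 1 < m → k + 1 ≠ m - 1 → d (k+1) ≠ φ0 (w (k+2)) := by
    intro k hk hne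
    have h := (hdsspec k hk).2
    rw [hFbdef] at h
    simp only [Nat.succ_ne_zero, if_false, if_neg hne] at h
    simp only [Finset.mem_insert, Finset.mem_singleton, not_or] at h
    rw [show k + 1 + 1 = k + 2 from rfl] at h
    exact h.2
  have hdlast : d (m-1) ≠ δ0 0 ∧ d (m-1) ≠ δ1 0 ∧ d (m-1) ≠ δ2 0 := by
    obtain ⟨k, hk⟩ : ∃ k, m - 1 = k + 1 := ⟨m - 2, by omega⟩
    have h := (hdsspec k (by omega)).2
    rw [hFbdef] at h
    simp only [Nat.succ_ne_zero, if_false, if_pos (by omega : k + 1 = m - 1)] at h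
    simp only [Finset.mem_insert, Finset.mem_singleton, not_or] at h
    rw [hk]
    exact ⟨h.2.1, h.2.2.1, h.2.2.2⟩
  -- the recoloring sequence for the outside vertices
  set σout : List (Fin (m+3) × ℕ) := (List.range m).map (fun k => (w k, d k)) with hσoutdef
  have hout : ∀ n, n ≤ m → ∀ v : Fin (m+3),
      applySeq φ0 (σout.take n) v =
        if 3 ≤ v.val ∧ v.val < 3 + n then d (v.val - 3) else φ0 v := by
    intro n hn v
    have htake : σout.take n = (List.range n).map (fun k => (w k, d k)) := by
      rw [hσoutdef, ← List.map_take, List.take_range, show n ⊓ m = n by omega]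
    rw [htake]
    by_cases hv : 3 ≤ v.val ∧ v.val < 3 + n
    · rw [if_pos hv]
      have hlt := applySeq_range_map_of_lt φ0 w d (n := n) (k := v.val - 3)
        (fun i j hi hj hij => by
          have h1 := hw i (by omega)
          have h2 := hw j (by omega)
          have : (w i).val = (w j).val := by rw [hij]
          omega)
        (by omega)
      have hveq : v = w (v.val - 3) := Fin.ext (by rw [hw _ (by omega)]; omega)
      rw [← hveq] at hlt
      exact hlt
    · rw [if_neg hv]
      refine applySeq_range_map_of_ne φ0 w d (fun k hk hvk => ?_)
      have := hw k (by omega)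
      rw [hvk] at hv
      omega
  have hlenout : σout.length = m := by rw [hσoutdef]; simp
  have hbase : ∀ v : Fin (m+3),
      applySeq φ0 σout v = if v.val < 3 then φ0 v else d (v.val - 3) := by
    intro v
    have htk : σout.take m = σout := by
      rw [hσoutdef, ← List.map_take, List.take_range, min_self]
    rw [← htk, hout m le_rfl v]
    have hvlt := v.isLt
    split_ifs <;> first | rfl | omega
  have houtNotT : ∀ p ∈ σout, p.1 ∉ T := by
    intro p hp
    rw [hσoutdef, List.mem_map] at hp
    obtain ⟨k, hk, rfl⟩ := hp
    rw [List.mem_range] at hk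
    show w k ∉ T
    rw [hTmem, hw k hk]
    omega
  have hmemTa : ∀ p ∈ σa, p.1.val < 3 := fun p hp => (hTmem p.1).1 (haIn p hp)
  have hmemTb : ∀ p ∈ σb, p.1.val < 3 := fun p hp => (hTmem p.1).1 (hbIn p hp)
  -- properness of phases with fixed outside colors
  have hphase : ∀ (α β : Fin (m+3) → ℕ) (σ : List (Fin (m+3) × ℕ)) (base : Fin (m+3) → ℕ),
      (∀ p ∈ σ, p.1.val < 3) → OnceOnly σ →
      ProperSeqOn (SimpleGraph.cycleGraph (m+3)) T α σ → applySeq α σ = β →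
      d 0 ≠ α 2 → d 0 ≠ β 2 → d (m-1) ≠ α 0 → d (m-1) ≠ β 0 →
      (∀ v : Fin (m+3), v.val < 3 → base v = α v) →
      (∀ v : Fin (m+3), 3 ≤ v.val → base v = d (v.val - 3)) →
      ProperSeqOn (SimpleGraph.cycleGraph (m+3)) Finset.univ base σ := by
    intro α β σ base hin honce hprop heq h02 h12 h00 h10 hbT hbO τ hτ
    have hval : ∀ v : Fin (m+3), v.val < 3 → applySeq base τ v = applySeq α τ v :=
      fun v hv => applySeq_congr τ (hbT v hv)
    have hvalO : ∀ v : Fin (m+3), 3 ≤ v.val → applySeq base τ v = d (v.val - 3) := by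
      intro v hv
      rw [applySeq_of_not_mem, hbO v hv]
      intro hmem
      rw [List.mem_map] at hmem
      obtain ⟨p, hp, rfl⟩ := hmem
      exact absurd (hin p (hτ.subset hp)) (by omega)
    apply hproper
    intro i
    have hb : (i+1).val = (i.val + 1) % (m+3) := by simp [Fin.add_def]
    have hilt := i.isLt
    by_cases h1 : i.val + 1 < 3
    · have hb1 : (i+1).val = i.val + 1 := by rw [hb, Nat.mod_eq_of_lt (by omega)]
      rw [hval i (by omega), hval (i+1) (by omega)]
      exact hprop τ hτ i ((hTmem i).2 (by omega)) (i+1) ((hTmem _).2 (by omega)) (hAdjSucc i)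
    by_cases h2 : i.val = 2
    · have hb1 : (i+1).val = 3 := by rw [hb, Nat.mod_eq_of_lt (by omega), h2]
      rw [hval i (by omega), hvalO (i+1) (by omega), hb1,
        show (3:ℕ) - 3 = 0 by norm_num]
      have hi : i = (2 : Fin (m+3)) := Fin.ext (by rw [h2, hval2])
      rw [hi]
      rcases applySeq_prefix_once (φ := α) (v := (2 : Fin (m+3))) hτ honce with h | h
      · rw [h]; exact h02.symm
      · rw [h, heq]; exact h12.symm
    by_cases h3 : i.val = m + 2
    · have hb1 : (i+1).val = 0 := by
        rw [hb, h3, show m + 2 + 1 = m + 3 from rfl, Nat.mod_self]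
      rw [hvalO i (by omega), hval (i+1) (by omega), h3,
        show m + 2 - 3 = m - 1 by omega]
      have hi : i + 1 = (0 : Fin (m+3)) := Fin.ext (by rw [hb1, Fin.val_zero])
      rw [hi]
      rcases applySeq_prefix_once (φ := α) (v := (0 : Fin (m+3))) hτ honce with h | h
      · rw [h]; exact h00
      · rw [h, heq]; exact h10
    · have hb1 : (i+1).val = i.val + 1 := by rw [hb, Nat.mod_eq_of_lt (by omega)]
      rw [hvalO i (by omega), hvalO (i+1) (by omega), hb1,
        show i.val + 1 - 3 = (i.val - 3) + 1 by omega]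
      exact (hdprev (i.val - 3) (by omega)).symm
  -- properness of prefixes of the outside recoloring
  have houtProper : ∀ τ, τ <+: σout →
      ProperOn (SimpleGraph.cycleGraph (m+3)) Finset.univ (applySeq φ0 τ) := by
    intro τ hτ
    have hn : τ.length ≤ m := by
      have := hτ.length_le
      omega
    have hτeq : τ = σout.take τ.length := List.prefix_iff_eq_take.mp hτ
    rw [hτeq]
    set n := τ.length with hndef
    apply hproper
    intro i
    rw [hout n hn i, hout n hn (i+1)]
    have hb : (i+1).val = (i.val + 1) % (m+3) := by simp [Fin.add_def]
    have hilt := i.isLt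
    by_cases h3 : i.val = m + 2
    · have hb1 : (i+1).val = 0 := by
        rw [hb, h3, show m + 2 + 1 = m + 3 from rfl, Nat.mod_self]
      rw [hb1, h3]
      by_cases hn2 : m + 2 < 3 + n
      · rw [if_pos ⟨by omega, hn2⟩, if_neg (by omega)]
        have hi : i + 1 = (0 : Fin (m+3)) := Fin.ext (by rw [hb1, Fin.val_zero])
        rw [hi, ← hstart 0 h0T, show m + 2 - 3 = m - 1 by omega]
        exact hdlast.1
      · rw [if_neg (by omega), if_neg (by omega)]
        exact hφ0 i (Finset.mem_univ i) (i+1) (Finset.mem_univ _) (hAdjSucc i)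
    · have hb1 : (i+1).val = i.val + 1 := by rw [hb, Nat.mod_eq_of_lt (by omega)]
      rw [hb1]
      by_cases hrec1 : 3 ≤ i.val ∧ i.val < 3 + n
      · rw [if_pos hrec1]
        by_cases hrec2 : i.val + 1 < 3 + n
        · rw [if_pos ⟨by omega, hrec2⟩, show i.val + 1 - 3 = (i.val - 3) + 1 by omega]
          exact (hdprev _ (by omega)).symm
        · rw [if_neg (by omega)]
          by_cases hk0 : i.val = 3
          · have hi1 : i + 1 = w 1 := Fin.ext (by rw [hb1, hk0, hw 1 (by omega)])
            rw [hi1, hk0, show (3:ℕ) - 3 = 0 by norm_num]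
            exact hd0.2.2.2
          · obtain ⟨j, hj⟩ : ∃ j, i.val - 3 = j + 1 := ⟨i.val - 4, by omega⟩
            have hi1 : i + 1 = w (i.val - 2) := Fin.ext (by rw [hb1, hw _ (by omega)]; omega)
            rw [hi1, hj, show i.val - 2 = j + 2 by omega]
            exact hdmid j (by omega) (by omega)
      · rw [if_neg hrec1]
        by_cases hrec2 : 3 ≤ i.val + 1 ∧ i.val + 1 < 3 + n
        · rw [if_pos hrec2, show i.val + 1 - 3 = 0 by omega]
          have h2 : i.val = 2 := by omega
          have hi : i = (2 : Fin (m+3)) := Fin.ext (by rw [h2, hval2])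
          rw [hi, ← hstart 2 h2T]
          exact hd0.1.symm
        · rw [if_neg hrec2]
          exact hφ0 i (Finset.mem_univ i) (i+1) (Finset.mem_univ _) (hAdjSucc i)
  -- the two lifted colorings
  set φ1 : Fin (m+3) → ℕ := fun v => if v.val < 3 then δ1 v else d (v.val - 3) with hφ1
  set φ2 : Fin (m+3) → ℕ := fun v => if v.val < 3 then δ2 v else d (v.val - 3) with hφ2
  have hphase1 : ProperSeqOn (SimpleGraph.cycleGraph (m+3)) Finset.univ
      (applySeq φ0 σout) σa :=
    hphase δ0 δ1 σa (applySeq φ0 σout) hmemTa haOnce haProp haEq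
      hd0.1 hd0.2.1 hdlast.1 hdlast.2.1
      (fun v hv => by
        rw [hbase v, if_pos hv]
        exact (hstart v ((hTmem v).2 hv)).symm)
      (fun v hv => by rw [hbase v, if_neg (by omega)])
  have hphase2 : ProperSeqOn (SimpleGraph.cycleGraph (m+3)) Finset.univ φ1 σb :=
    hphase δ1 δ2 σb φ1 hmemTb hbOnce hbProp hbEq
      hd0.2.1 hd0.2.2.1 hdlast.2.1 hdlast.2.2
      (fun v hv => by rw [hφ1]; simp only; rw [if_pos hv])
      (fun v hv => by rw [hφ1]; simp only; rw [if_neg (by omega)])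
  have heq1 : applySeq φ0 (σout ++ σa) = φ1 := by
    funext v
    rw [applySeq_append]
    by_cases hv : v.val < 3
    · have h1 : applySeq φ0 σout v = δ0 v := by
        rw [hbase v, if_pos hv]
        exact (hstart v ((hTmem v).2 hv)).symm
      rw [applySeq_congr σa h1, haEq, hφ1]
      simp only
      rw [if_pos hv]
    · have h2 : v ∉ List.map Prod.fst σa := by
        intro hmm
        rw [List.mem_map] at hmm
        obtain ⟨p, hp, rfl⟩ := hmm
        exact hv (hmemTa p hp)
      rw [applySeq_of_not_mem h2, hbase v, if_neg hv, hφ1]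
      simp only
      rw [if_neg hv]
  have heq2 : applySeq φ1 σb = φ2 := by
    funext v
    by_cases hv : v.val < 3
    · have h1 : φ1 v = δ1 v := by rw [hφ1]; simp only; rw [if_pos hv]
      rw [applySeq_congr σb h1, hbEq, hφ2]
      simp only
      rw [if_pos hv]
    · have h2 : v ∉ List.map Prod.fst σb := by
        intro hmm
        rw [List.mem_map] at hmm
        obtain ⟨p, hp, rfl⟩ := hmm
        exact hv (hmemTb p hp)
      rw [applySeq_of_not_mem h2]
      simp [hφ1, hφ2, hv]
  refine ⟨φ1, φ2, ⟨σout ++ σa, σb,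
    fun v hv => (hstart v hv).symm,
    fun v hv => by rw [hφ1]; simp only; rw [if_pos ((hTmem v).1 hv)],
    fun v hv => by rw [hφ2]; simp only; rw [if_pos ((hTmem v).1 hv)],
    ⟨hφ0, fun p _ => Finset.mem_univ _, ?_, ?_, heq1, ?_,
      fun p _ => Finset.mem_univ _, hbOnce, hphase2, heq2, ?_⟩, ?_, ?_⟩,
    fun v hv => by
      have hv3 : ¬ v.val < 3 := fun h => hv ((hTmem v).2 h)
      simp [hφ1, hφ2, hv3]⟩
  · -- OnceOnly (σout ++ σa)
    have hfst : σout.map Prod.fst = (List.range m).map w := by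
      rw [hσoutdef, List.map_map]
      rfl
    rw [OnceOnly, List.map_append]
    apply List.Nodup.append
    · rw [hfst]
      exact List.Nodup.map_on
        (fun x hx y hy hxy => by
          rw [List.mem_range] at hx hy
          have h1 := hw x hx
          have h2 := hw y hy
          have : (w x).val = (w y).val := by rw [hxy]
          omega)
        (List.nodup_range (n := m))
    · exact haOnce
    · intro a ha hb
      rw [hfst, List.mem_map] at ha
      obtain ⟨k, hk, rfl⟩ := ha
      rw [List.mem_range] at hk
      rw [List.mem_map] at hb
      obtain ⟨p, hp, hpa⟩ := hb
      have h5 := hmemTa p hp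
      rw [hpa] at h5
      have := hw k hk
      omega
  · -- ProperSeqOn φ0 (σout ++ σa)
    intro τ hτ
    rcases prefix_append_cases hτ with h | ⟨τ₂, hτ₂, rfl⟩
    · exact houtProper τ h
    · rw [applySeq_append]
      exact hphase1 τ₂ hτ₂
  · -- φ1 ∈ L1
    intro v _
    by_cases hv : v.val < 3
    · rw [hφ1]; simp only; rw [if_pos hv]
      exact hL1T v ((hTmem v).2 hv)
    · rw [hφ1]; simp only; rw [if_neg hv]
      have hk : v.val - 3 < m := by have := v.isLt; omega
      have hveq : w (v.val - 3) = v := Fin.ext (by rw [hw _ hk]; omega)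
      have hmem := hdL _ hk
      rw [hveq] at hmem
      exact (Finset.mem_inter.mp hmem).1
  · -- φ2 ∈ L2
    intro v _
    by_cases hv : v.val < 3
    · rw [hφ2]; simp only; rw [if_pos hv]
      exact hL2T v ((hTmem v).2 hv)
    · rw [hφ2]; simp only; rw [if_neg hv]
      have hk : v.val - 3 < m := by have := v.isLt; omega
      have hveq : w (v.val - 3) = v := Fin.ext (by rw [hw _ hk]; omega)
      have hmem := hdL _ hk
      rw [hveq] at hmem
      exact (Finset.mem_inter.mp hmem).2
  · -- LateFor T (σout ++ σa)
    unfold LateFor subSeq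
    rw [List.filter_append, List.filter_append]
    have hf1 : List.filter (fun p => p.1 ∉ T) σout = σout :=
      List.filter_eq_self.mpr fun p hp => by simpa using houtNotT p hp
    have hf2 : List.filter (fun p => p.1 ∉ T) σa = [] :=
      List.filter_eq_nil_iff.mpr fun p hp => by simpa using haIn p hp
    have hf3 : List.filter (fun p => p.1 ∈ T) σout = [] :=
      List.filter_eq_nil_iff.mpr fun p hp => by simpa using houtNotT p hp
    have hf4 : List.filter (fun p => p.1 ∈ T) σa = σa :=
      List.filter_eq_self.mpr fun p hp => by simpa using haIn p hp
    rw [hf1, hf2, hf3, hf4]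
    simp
  · -- LateFor T σb
    unfold LateFor subSeq
    have hf2 : List.filter (fun p => p.1 ∉ T) σb = [] :=
      List.filter_eq_nil_iff.mpr fun p hp => by simpa using hbIn p hp
    have hf4 : List.filter (fun p => p.1 ∈ T) σb = σb :=
      List.filter_eq_self.mpr fun p hp => by simpa using hbIn p hp
    rw [hf2, hf4]
    simp
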